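/- For a bounded operator T on a complex Hilbert space and any 0 ≤ α ≤ 1, the mixed Cauchy–Schwarz inequality |⟨Tx, y⟩|² ≤ ⟨|T|^{2α} x, x⟩ ⟨|T*|^{2(1−α)} y, y⟩ holds for all x, y ∈ H. -/

import Mathlib

/-!
For `ε > 0` the operator `c = T*T + ε` is invertible, and Cauchy–Schwarz applied to
`⟪Tx, y⟫ = ⟪c^{α/2} x, c^{-α/2} T* y⟫` gives `|⟪Tx, y⟫|² ≤ ⟪c^α x, x⟫ ⟪T c^{-α} T* y, y⟫`.
Since `T (T*T) = (TT*) T`, the operator `T` intertwines every continuous function of `T*T` with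
the same function of `TT*`, so `T c^{-α} T* = g(TT*)` with `g(t) = (t + ε)^{-α} t ≤ t^{1-α}`.
Finally `c^α → (T*T)^α = |T|^{2α}` as `ε → 0` by continuity of the functional calculus.
-/

open scoped InnerProductSpace

/-- The modulus `|T| = (T*T)^{1/2}` of a bounded operator. -/
noncomputable def oabs {H : Type*} [NormedAddCommGroup H] [InnerProductSpace ℂ H]
    [CompleteSpace H] (T : H →L[ℂ] H) : H →L[ℂ] H := CFC.sqrt (star T * T)

open scoped NNReal Polynomial
open Filter Topology

namespace SemiconjBy

theorem aeval {R A : Type*} [CommSemiring R] [Semiring A] [Algebra R A] {S a b : A}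
    (h : SemiconjBy S a b) (p : R[X]) :
    SemiconjBy S (Polynomial.aeval a p) (Polynomial.aeval b p) := by
  induction p using Polynomial.induction_on' with
  | add p q hp hq => simpa only [map_add] using hp.add_right hq
  | monomial n r =>
    simpa only [Polynomial.aeval_monomial] using
      SemiconjBy.mul_right (Algebra.commute_algebraMap_right r S) (h.pow_right n)

variable {A : Type*} [CStarAlgebra A]

theorem cfc_real {S a b : A} (h : SemiconjBy S a b) (ha : IsSelfAdjoint a)
    (hb : IsSelfAdjoint b) {f : ℝ → ℝ} (hf : Continuous f) :
    SemiconjBy S (cfc f a) (cfc f b) := by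
  obtain ⟨r, hr⟩ := ((spectrum.isCompact (𝕜 := ℝ) a).union
    (spectrum.isCompact (𝕜 := ℝ) b)).isBounded.subset_closedBall 0
  rw [Real.closedBall_eq_Icc, zero_sub, zero_add] at hr
  -- polynomials converging to `f` uniformly on an interval containing both spectra
  choose p hp using fun n : ℕ => exists_polynomial_near_of_continuousOn (-r) r f
    hf.continuousOn (1 / (n + 1)) Nat.one_div_pos_of_nat
  have hpf : TendstoUniformlyOn (fun n t => (p n).eval t) f atTop (Set.Icc (-r) r) := by
    rw [Metric.tendstoUniformlyOn_iff]
    intro δ hδ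
    obtain ⟨N, hN⟩ := exists_nat_one_div_lt hδ
    filter_upwards [eventually_ge_atTop N] with n hn t ht
    rw [dist_comm, Real.dist_eq]
    refine (hp n t ht).trans_le (le_trans ?_ hN.le)
    gcongr
  have hlim {c : A} (hc : IsSelfAdjoint c) (hcr : spectrum ℝ c ⊆ Set.Icc (-r) r) :
      Tendsto (fun n => Polynomial.aeval c (p n)) atTop (𝓝 (cfc f c)) := by
    simpa only [cfc_polynomial _ c hc] using
      tendsto_cfc_fun (a := c) (hpf.mono hcr) (.of_forall fun n => (p n).continuousOn)
  refine tendsto_nhds_unique (((hlim ha ?_).const_mul S).congr fun n => (h.aeval (p n)).eq)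
    ((hlim hb ?_).mul_const S)
  · exact Set.subset_union_left.trans hr
  · exact Set.subset_union_right.trans hr

theorem cfc_nnreal [PartialOrder A] [StarOrderedRing A] {S a b : A} (h : SemiconjBy S a b)
    (ha : 0 ≤ a) (hb : 0 ≤ b) {f : ℝ≥0 → ℝ≥0} (hf : Continuous f) :
    SemiconjBy S (cfc f a) (cfc f b) := by
  rw [cfc_nnreal_eq_real f a ha, cfc_nnreal_eq_real f b hb]
  exact h.cfc_real ha.isSelfAdjoint hb.isSelfAdjoint (by fun_prop)

end SemiconjBy

theorem NNReal.add_rpow_neg_mul_le_rpow_one_sub (t ε : ℝ≥0) {α : ℝ} (hα : 0 ≤ α) :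
    (t + ε) ^ (-α) * t ≤ t ^ (1 - α) := by
  rcases eq_zero_or_pos t with rfl | ht
  · simp
  calc (t + ε) ^ (-α) * t ≤ t ^ (-α) * t :=
        mul_le_mul_left (NNReal.rpow_le_rpow_of_nonpos ht le_self_add (neg_nonpos.mpr hα)) t
    _ = t ^ (1 - α) := by
        rw [NNReal.rpow_sub ht.ne', NNReal.rpow_one, NNReal.rpow_neg, div_eq_mul_inv, mul_comm]

namespace CFC

variable {A : Type*} [CStarAlgebra A] [PartialOrder A] [StarOrderedRing A]

theorem add_algebraMap_rpow_eq_cfc {a : A} (ha : 0 ≤ a) (y : ℝ) {ε : ℝ≥0} (hε : 0 < ε) :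
    (a + algebraMap ℝ≥0 A ε) ^ y = cfc (fun t : ℝ≥0 => (t + ε) ^ y) a := by
  have hshift : a + algebraMap ℝ≥0 A ε = cfc (fun t : ℝ≥0 => t + ε) a := by
    rw [cfc_add_const ε _ a, cfc_id' ℝ≥0 a]
  rw [hshift, rpow_def, cfc_comp' (fun t : ℝ≥0 => t ^ y) (fun t => t + ε) a]

theorem mul_add_algebraMap_rpow_neg_mul_star_le (T : A) {α : ℝ} (hα₀ : 0 ≤ α) (hα₁ : α ≤ 1)
    {ε : ℝ≥0} (hε : 0 < ε) :
    T * (star T * T + algebraMap ℝ≥0 A ε) ^ (-α) * star T ≤ (T * star T) ^ (1 - α) := by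
  set g : ℝ≥0 → ℝ≥0 := fun t => (t + ε) ^ (-α)
  have hg : Continuous g :=
    NNReal.continuousOn_rpow_const_compl_zero.comp_continuous (by fun_prop) fun t =>
      (add_pos_of_nonneg_of_pos zero_le hε).ne'
  have hTg : T * cfc g (star T * T) = cfc g (T * star T) * T :=
    SemiconjBy.cfc_nnreal (show SemiconjBy T (star T * T) (T * star T) from
      (mul_assoc T (star T) T).symm) (star_mul_self_nonneg T) (mul_star_self_nonneg T) hg
  calc T * (star T * T + algebraMap ℝ≥0 A ε) ^ (-α) * star T
      = cfc (fun t => g t * t) (T * star T) := by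
        rw [add_algebraMap_rpow_eq_cfc (star_mul_self_nonneg T) _ hε, hTg, mul_assoc,
          cfc_mul g (fun t => t) _ hg.continuousOn (continuousOn_id' _),
          cfc_id' ℝ≥0 (T * star T)]
    _ ≤ (T * star T) ^ (1 - α) :=
        cfc_mono (fun t _ => NNReal.add_rpow_neg_mul_le_rpow_one_sub t ε hα₀)
          (hg.mul continuous_id).continuousOn
          (NNReal.continuous_rpow_const (sub_nonneg.mpr hα₁)).continuousOn

end CFC

namespace ContinuousLinearMap

variable {H : Type*} [NormedAddCommGroup H] [InnerProductSpace ℂ H]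

theorem re_inner_le_re_inner_of_le {A B : H →L[ℂ] H} (h : A ≤ B) (x : H) :
    (⟪A x, x⟫_ℂ).re ≤ (⟪B x, x⟫_ℂ).re := by
  simpa [inner_sub_left] using ((le_def A B).mp h).re_inner_nonneg_left x

theorem norm_apply_sq_of_isSelfAdjoint [CompleteSpace H] {u : H →L[ℂ] H} (hu : IsSelfAdjoint u)
    (x : H) :
    ‖u x‖ ^ 2 = (⟪(u * u) x, x⟫_ℂ).re := by
  rw [apply_norm_sq_eq_inner_adjoint_left, ← star_eq_adjoint, hu.star_eq]
  rfl

theorem norm_inner_sq_le_re_inner_rpow_mul_re_inner_rpow_neg [CompleteSpace H] {c : H →L[ℂ] H}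
    (hc : IsStrictlyPositive c) (β : ℝ) (x z : H) :
    ‖⟪x, z⟫_ℂ‖ ^ 2 ≤ (⟪(c ^ β) x, x⟫_ℂ).re * (⟪(c ^ (-β)) z, z⟫_ℂ).re := by
  set u := c ^ (β / 2)
  set v := c ^ (-(β / 2))
  have hu : IsSelfAdjoint u := CFC.rpow_nonneg.isSelfAdjoint
  have hv : IsSelfAdjoint v := CFC.rpow_nonneg.isSelfAdjoint
  have huu : u * u = c ^ β := by rw [← CFC.rpow_add hc.isUnit, add_halves]
  have hvv : v * v = c ^ (-β) := by rw [← CFC.rpow_add hc.isUnit, ← neg_add, add_halves]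
  have hvu : v (u x) = x := congr($(CFC.rpow_neg_mul_rpow (β / 2) hc) x)
  have hxz : ⟪x, z⟫_ℂ = ⟪u x, v z⟫_ℂ := by
    rw [← hv.adjoint_eq, adjoint_inner_right, hvu]
  calc ‖⟪x, z⟫_ℂ‖ ^ 2 ≤ (‖u x‖ * ‖v z‖) ^ 2 := by
        rw [hxz]; gcongr; exact norm_inner_le_norm _ _
    _ = _ := by
        rw [mul_pow, norm_apply_sq_of_isSelfAdjoint hu, norm_apply_sq_of_isSelfAdjoint hv, huu,
          hvv]

theorem norm_inner_apply_sq_le_add_algebraMap_rpow_mul [CompleteSpace H] (T : H →L[ℂ] H)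
    {α : ℝ} (hα₀ : 0 ≤ α) (hα₁ : α ≤ 1) (x y : H) {ε : ℝ≥0} (hε : 0 < ε) :
    ‖⟪T x, y⟫_ℂ‖ ^ 2 ≤
      (⟪((star T * T + algebraMap ℝ≥0 (H →L[ℂ] H) ε) ^ α) x, x⟫_ℂ).re *
        (⟪((T * star T) ^ (1 - α)) y, y⟫_ℂ).re := by
  set c := star T * T + algebraMap ℝ≥0 (H →L[ℂ] H) ε
  have hc : IsStrictlyPositive c :=
    IsStrictlyPositive.nonneg_add (star_mul_self_nonneg T)
      (isStrictlyPositive_algebraMap (A := H →L[ℂ] H) hε)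
  have hTy :
      (⟪(c ^ (-α)) (star T y), star T y⟫_ℂ).re ≤ (⟪((T * star T) ^ (1 - α)) y, y⟫_ℂ).re := by
    have hconj :
        ⟪(c ^ (-α)) (star T y), star T y⟫_ℂ = ⟪(T * c ^ (-α) * star T) y, y⟫_ℂ := by
      rw [star_eq_adjoint, adjoint_inner_right]
      rfl
    rw [hconj]
    exact re_inner_le_re_inner_of_le
      (CFC.mul_add_algebraMap_rpow_neg_mul_star_le T hα₀ hα₁ hε) y
  calc ‖⟪T x, y⟫_ℂ‖ ^ 2 = ‖⟪x, star T y⟫_ℂ‖ ^ 2 := by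
        rw [star_eq_adjoint, adjoint_inner_right]
    _ ≤ (⟪(c ^ α) x, x⟫_ℂ).re * (⟪(c ^ (-α)) (star T y), star T y⟫_ℂ).re :=
        norm_inner_sq_le_re_inner_rpow_mul_re_inner_rpow_neg hc α x (star T y)
    _ ≤ _ := by
      refine mul_le_mul_of_nonneg_left hTy ?_
      have hpos : 0 ≤ c ^ α := CFC.rpow_nonneg
      exact ((nonneg_iff_isPositive _).mp hpos).re_inner_nonneg_left x

theorem norm_inner_apply_sq_le_rpow_mul [CompleteSpace H] (T : H →L[ℂ] H)
    {α : ℝ} (hα₀ : 0 ≤ α) (hα₁ : α ≤ 1) (x y : H) :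
    ‖⟪T x, y⟫_ℂ‖ ^ 2 ≤
      (⟪((star T * T) ^ α) x, x⟫_ℂ).re * (⟪((T * star T) ^ (1 - α)) y, y⟫_ℂ).re := by
  set Q := (⟪((T * star T) ^ (1 - α)) y, y⟫_ℂ).re
  have hcont : Continuous fun ε : ℝ≥0 => (star T * T + algebraMap ℝ≥0 (H →L[ℂ] H) ε) ^ α :=
    Continuous.cfc_nnreal_of_mem_nhdsSet _ univ_mem (by fun_prop)
      (fun _ => add_nonneg (star_mul_self_nonneg T) (algebraMap_nonneg (β := H →L[ℂ] H) zero_le))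
      (NNReal.continuous_rpow_const hα₀).continuousOn
  have hlim : Tendsto (fun ε : ℝ≥0 => (star T * T + algebraMap ℝ≥0 (H →L[ℂ] H) ε) ^ α)
      (𝓝[>] 0) (𝓝 ((star T * T) ^ α)) := by
    have := hcont.tendsto 0
    simp only [map_zero, add_zero] at this
    exact this.mono_left nhdsWithin_le_nhds
  have hquad : Continuous fun A : H →L[ℂ] H => (⟪A x, x⟫_ℂ).re * Q := by fun_prop
  exact ge_of_tendsto ((hquad.tendsto _).comp hlim) <| eventually_nhdsWithin_of_forall
    fun _ hε => norm_inner_apply_sq_le_add_algebraMap_rpow_mul T hα₀ hα₁ x y hε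

end ContinuousLinearMap

theorem oabs_rpow_two_mul {H : Type*} [NormedAddCommGroup H] [InnerProductSpace ℂ H]
    [CompleteSpace H] (T : H →L[ℂ] H) {y : ℝ} (hy : 0 ≤ y) :
    CFC.rpow (oabs T) (2 * y) = (star T * T) ^ y := by
  calc CFC.rpow (oabs T) (2 * y) = ((star T * T) ^ (1 / 2 : ℝ)) ^ (2 * y) := by
        rw [oabs, CFC.sqrt_eq_rpow]
        rfl
    _ = (star T * T) ^ y := by
        rw [CFC.rpow_rpow_of_exponent_nonneg _ _ _ (by norm_num) (by positivity)
          (star_mul_self_nonneg T)]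
        ring_nf

/-- Kato's mixed Cauchy–Schwarz inequality:
`|⟨Tx, y⟩|² ≤ ⟨|T|^{2α} x, x⟩ ⟨|T*|^{2(1−α)} y, y⟩` for `0 ≤ α ≤ 1`. -/
theorem stmt_3 {H : Type*} [NormedAddCommGroup H] [InnerProductSpace ℂ H] [CompleteSpace H]
    (T : H →L[ℂ] H) (α : ℝ) (hα : α ∈ Set.Icc (0 : ℝ) 1) (x y : H) :
    ‖⟪T x, y⟫_ℂ‖ ^ 2 ≤
      (⟪(CFC.rpow (oabs T) (2 * α)) x, x⟫_ℂ).re *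
        (⟪(CFC.rpow (oabs (star T)) (2 * (1 - α))) y, y⟫_ℂ).re := by
  obtain ⟨hα₀, hα₁⟩ := hα
  rw [oabs_rpow_two_mul T hα₀, oabs_rpow_two_mul (star T) (sub_nonneg.mpr hα₁), star_star]
  exact ContinuousLinearMap.norm_inner_apply_sq_le_rpow_mul T hα₀ hα₁ x y
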